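/- For every positive integer n, log n = 2 ∑_{r=2}^{n} (−1)^r g(r) p(n, r−1), where g(r) := ∑_{ℓ=2}^{r} (−1)^ℓ ℓ² log ℓ / ((r+ℓ)! (r−ℓ)!) and p(x,s) := ∏_{i=1}^{s} (x² − i²). (The sum may be taken over all r ≥ 2 since p(n, r−1) = 0 for r − 1 ≥ n.) -/

import Mathlib

open scoped BigOperators

namespace PaperStmt

/-- `p(x, s) := ∏_{i=1}^{s} (x² - i²)`, with `p(x, 0) = 1`. -/
def p (x : ℝ) (s : ℕ) : ℝ := ∏ i ∈ Finset.Icc 1 s, (x ^ 2 - (i : ℝ) ^ 2)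

/-- `g(r) := ∑_{ℓ=2}^{r} (-1)^ℓ ℓ² log ℓ / ((r+ℓ)! (r-ℓ)!)`. -/
noncomputable def g (r : ℕ) : ℝ :=
  ∑ ℓ ∈ Finset.Icc 2 r,
    (-1 : ℝ) ^ ℓ * (ℓ : ℝ) ^ 2 * Real.log ℓ
      / ((Nat.factorial (r + ℓ) : ℝ) * (Nat.factorial (r - ℓ) : ℝ))

/-! The identity holds with any sequence `c` in place of `log`. Exchanging the sums over `r` and
`ℓ` reduces it to the orthogonality relation
`∑_{r=ℓ}^{n} (-1)^r p(n, r-1) / ((r+ℓ)! (r-ℓ)!) = δ_{ℓn} (-1)^n / (2n²)`.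
Since `p(n, r-1) = (n+r-1)! / (n (n-r)!)`, for `ℓ < n` this sum is, up to a constant factor, the
`(n-ℓ)`-th forward difference of `k ↦ C(n+ℓ-1+k, n-ℓ-1)`, a polynomial of degree `n-ℓ-1` in `k`,
hence zero. -/

open Finset Nat

theorem sum_range_neg_one_pow_mul_choose_mul_choose_eq_zero {j m : ℕ} (hjm : j < m) (b : ℕ) :
    ∑ k ∈ range (m + 1), (-1 : ℤ) ^ k * m.choose k * (b + k).choose j = 0 := by
  have hdiff : (fwdDiff 1)^[m] (fun x ↦ x.choose j : ℕ → ℤ) = 0 := by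
    obtain ⟨t, rfl⟩ := Nat.exists_eq_add_of_lt hjm
    rw [show j + t + 1 = t + 1 + j by ring, Function.iterate_add_apply,
      show (fun x ↦ x.choose j : ℕ → ℤ) = fun x ↦ x.choose (j + 0) from rfl,
      fwdDiff_iter_choose, Function.iterate_succ_apply]
    simp only [Nat.choose_zero_right, Nat.cast_one, fwdDiff_const]
    exact Function.iterate_fixed (fwdDiff_const 1 0) t
  have hsign : ∀ k ∈ range (m + 1), (-1 : ℤ) ^ k = (-1) ^ m * (-1) ^ (m - k) := fun k hk ↦ by
    have hkm : k ≤ m := Nat.lt_succ_iff.mp (mem_range.mp hk)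
    rw [← pow_add, show m + (m - k) = 2 * (m - k) + k by omega, pow_add, pow_mul, neg_one_sq,
      one_pow, one_mul]
  have hb := congr_fun hdiff b
  rw [fwdDiff_iter_eq_sum_shift, Pi.zero_apply] at hb
  rw [sum_congr rfl fun k hk ↦ by rw [hsign k hk], ← mul_zero ((-1 : ℤ) ^ m), ← hb, mul_sum]
  simp [mul_assoc]

theorem p_succ (x : ℝ) (s : ℕ) : p x (s + 1) = p x s * (x ^ 2 - ((s + 1 : ℕ) : ℝ) ^ 2) :=
  prod_Icc_succ_top (by omega) _

theorem p_mul_factorial {n s : ℕ} (hsn : s < n) :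
    p n s * (n * (n - 1 - s)! : ℝ) = (n + s)! := by
  induction s with
  | zero => simp [p, ← Nat.cast_mul, Nat.mul_factorial_pred (by omega : n ≠ 0)]
  | succ s ih =>
    obtain ⟨d, rfl⟩ : ∃ d, n = s + 2 + d := ⟨n - (s + 2), by omega⟩
    specialize ih (by omega)
    rw [show s + 2 + d - 1 - s = d + 1 by omega, Nat.factorial_succ] at ih
    rw [p_succ, show s + 2 + d - 1 - (s + 1) = d by omega,
      show s + 2 + d + (s + 1) = (s + 2 + d + s) + 1 by omega, Nat.factorial_succ]
    push_cast at ih ⊢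
    linear_combination (2 * s + d + 3 : ℝ) * ih

theorem neg_one_pow_mul_p_div_factorial_eq {ℓ j k : ℕ} (hℓ : 1 ≤ ℓ) (hk : k ≤ j + 1) :
    (-1 : ℝ) ^ (ℓ + k) * p ↑(ℓ + j + 1) (ℓ + k - 1) / ((ℓ + k + ℓ)! * (ℓ + k - ℓ)!) =
      (-1) ^ ℓ / ((ℓ + j + 1) * (j + 1)) *
        ((-1) ^ k * (j + 1).choose k * (2 * ℓ + j + k).choose j) := by
  have hp := p_mul_factorial (n := ℓ + j + 1) (s := ℓ + k - 1) (by omega)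
  rw [show ℓ + j + 1 - 1 - (ℓ + k - 1) = j + 1 - k by omega,
    show ℓ + j + 1 + (ℓ + k - 1) = 2 * ℓ + j + k by omega] at hp
  rw [show ℓ + k + ℓ = 2 * ℓ + k by omega, Nat.add_sub_cancel_left,
    Nat.cast_choose ℝ hk, Nat.cast_choose ℝ (by omega : j ≤ 2 * ℓ + j + k),
    show 2 * ℓ + j + k - j = 2 * ℓ + k by omega, Nat.factorial_succ j, ← hp]
  field_simp
  push_cast
  ring

theorem sum_Icc_neg_one_pow_mul_p_div_factorial {ℓ n : ℕ} (hℓ : 1 ≤ ℓ) (hℓn : ℓ ≤ n) :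
    ∑ r ∈ Icc ℓ n, (-1 : ℝ) ^ r * p n (r - 1) / ((r + ℓ)! * (r - ℓ)!) =
      if ℓ = n then (-1 : ℝ) ^ n / (2 * (n : ℝ) ^ 2) else 0 := by
  rcases hℓn.eq_or_lt with rfl | hlt
  · have hp := p_mul_factorial (n := ℓ) (s := ℓ - 1) (by omega)
    rw [show ℓ - 1 - (ℓ - 1) = 0 by omega] at hp
    have hfact : ((ℓ + ℓ)! : ℝ) = 2 * ℓ * (ℓ + (ℓ - 1))! := by
      rw [show ℓ + ℓ = (ℓ + (ℓ - 1)) + 1 by omega, Nat.factorial_succ]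
      push_cast [show ℓ + (ℓ - 1) + 1 = 2 * ℓ by omega]
      ring
    have hℓ0 : (ℓ : ℝ) ≠ 0 := by positivity
    rw [Icc_self, sum_singleton, if_pos rfl, Nat.sub_self, hfact]
    field_simp
    simpa using hp
  · obtain ⟨j, rfl⟩ : ∃ j, n = ℓ + j + 1 := ⟨n - ℓ - 1, by omega⟩
    have hsum := sum_range_neg_one_pow_mul_choose_mul_choose_eq_zero
      (Nat.lt_succ_self j) (2 * ℓ + j)
    rw [← Finset.Ico_add_one_right_eq_Icc, sum_Ico_eq_sum_range,
      show ℓ + j + 1 + 1 - ℓ = j + 1 + 1 by omega, if_neg hlt.ne,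
      sum_congr rfl fun k hk ↦ neg_one_pow_mul_p_div_factorial_eq hℓ
        (Nat.lt_succ_iff.mp (mem_range.mp hk)), ← mul_sum]
    exact mul_eq_zero_of_right _ (by exact_mod_cast hsum)

theorem two_mul_sum_neg_one_pow_mul_p_inversion (c : ℕ → ℝ) {a n : ℕ} (ha : 1 ≤ a) (han : a ≤ n) :
    2 * ∑ r ∈ Icc a n, (-1 : ℝ) ^ r *
        (∑ ℓ ∈ Icc a r, (-1 : ℝ) ^ ℓ * (ℓ : ℝ) ^ 2 * c ℓ / ((r + ℓ)! * (r - ℓ)!)) * p n (r - 1) =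
      c n := by
  have hswap : ∑ r ∈ Icc a n, (-1 : ℝ) ^ r *
        (∑ ℓ ∈ Icc a r, (-1 : ℝ) ^ ℓ * (ℓ : ℝ) ^ 2 * c ℓ / ((r + ℓ)! * (r - ℓ)!)) * p n (r - 1) =
      ∑ ℓ ∈ Icc a n, (-1 : ℝ) ^ ℓ * (ℓ : ℝ) ^ 2 * c ℓ *
        ∑ r ∈ Icc ℓ n, (-1 : ℝ) ^ r * p n (r - 1) / ((r + ℓ)! * (r - ℓ)!) := by
    simp_rw [mul_sum, sum_mul]
    rw [sum_comm' (t' := Icc a n) (s' := fun ℓ ↦ Icc ℓ n) fun r ℓ ↦ by simp only [mem_Icc]; omega]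
    exact sum_congr rfl fun ℓ _ ↦ sum_congr rfl fun r _ ↦ by ring
  have hn : (n : ℝ) ≠ 0 := by norm_cast; omega
  rw [hswap, sum_congr rfl fun ℓ hℓ ↦ by
      rw [sum_Icc_neg_one_pow_mul_p_div_factorial (ha.trans (mem_Icc.mp hℓ).1) (mem_Icc.mp hℓ).2],
    ]
  simp_rw [mul_ite, mul_zero]
  rw [sum_ite_eq', if_pos (mem_Icc.mpr ⟨han, le_rfl⟩)]
  field_simp
  rw [← pow_mul, Even.neg_one_pow ⟨n, by ring⟩, one_mul]

theorem stmt19_general (n : ℕ) :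
    Real.log n = 2 * ∑ r ∈ Finset.Icc 2 n, (-1 : ℝ) ^ r * g r * p n (r - 1) := by
  rcases lt_or_ge n 2 with h2 | h2
  · interval_cases n <;> simp
  · exact (two_mul_sum_neg_one_pow_mul_p_inversion (fun ℓ ↦ Real.log ℓ) one_le_two h2).symm

/-- For every positive integer `n`, `log n = 2 ∑_{r=2}^{n} (-1)^r g(r) p(n, r-1)`. -/
theorem stmt19 (n : ℕ) (hn : 1 ≤ n) :
    Real.log n = 2 * ∑ r ∈ Finset.Icc 2 n, (-1 : ℝ) ^ r * g r * p n (r - 1) :=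
  stmt19_general n

end PaperStmt
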